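/- Let S be a numerical semigroup and u an element of the MED closure of S. Let S_u be the numerical semigroup generated by S ∪ {u}. Then MED(S_u) = MED(S). -/

import Mathlib

/-!
The ordinary semigroup `{0} ∪ [m(S), ∞)` is MED, so `MED(S)` lies inside it; hence any
semigroup `S'` with `S ⊆ S' ⊆ MED(S)` has multiplicity `m(S)`. Such an `S'` has the same MED
oversemigroups of that multiplicity as `S`, since each of them contains `MED(S) ⊇ S'`. The
semigroup `S_u` is one of these because `MED(S)` is a submonoid containing `S ∪ {u}`.
-/

/-- A numerical semigroup: an additive submonoid of ℕ with finite complement. -/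
structure NumSgp where
  carrier : Set ℕ
  zero_mem : 0 ∈ carrier
  add_mem : ∀ ⦃a b : ℕ⦄, a ∈ carrier → b ∈ carrier → a + b ∈ carrier
  cofinite : carrierᶜ.Finite

/-- The multiplicity: the smallest nonzero element. -/
noncomputable def NumSgp.mult (S : NumSgp) : ℕ := sInf {n | n ∈ S.carrier ∧ n ≠ 0}

/-- The Apéry set of `S` with respect to `s`: elements `x ∈ S` with `x - s ∉ S`
(over the integers, i.e. there is no `y ∈ S` with `y + s = x`). -/
def NumSgp.Ap (S : NumSgp) (s : ℕ) : Set ℕ :=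
  {x | x ∈ S.carrier ∧ ∀ y ∈ S.carrier, y + s ≠ x}

/-- `z` is an Arf element of `S`. -/
def NumSgp.ArfElem (S : NumSgp) (z : ℕ) : Prop :=
  ∀ x ∈ S.carrier, ∀ y ∈ S.carrier, z ≤ x → z ≤ y → x + y - z ∈ S.carrier

/-- The minimal generating set: nonzero elements not expressible as a sum of two
nonzero elements of `S`. -/
def NumSgp.minGen (S : NumSgp) : Set ℕ :=
  {x | x ∈ S.carrier ∧ x ≠ 0 ∧ ∀ a ∈ S.carrier, ∀ b ∈ S.carrier, a ≠ 0 → b ≠ 0 → a + b ≠ x}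

/-- The embedding dimension: the cardinality of the minimal generating set. -/
noncomputable def NumSgp.edim (S : NumSgp) : ℕ := S.minGen.ncard

/-- The Frobenius number: the largest gap. -/
noncomputable def NumSgp.frob (S : NumSgp) : ℕ := sSup S.carrierᶜ

/-- The conductor: the smallest `c` with `c + ℤ≥0 ⊆ S`. -/
noncomputable def NumSgp.cond (S : NumSgp) : ℕ := sInf {c | ∀ n, c ≤ n → n ∈ S.carrier}

/-- The genus: the number of gaps. -/
noncomputable def NumSgp.genus (S : NumSgp) : ℕ := S.carrierᶜ.ncard

/-- The set of pseudo-Frobenius numbers. -/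
def NumSgp.PF (S : NumSgp) : Set ℕ :=
  {x | x ∉ S.carrier ∧ ∀ s ∈ S.carrier, s ≠ 0 → x + s ∈ S.carrier}

/-- The type of `S`: the number of pseudo-Frobenius numbers. -/
noncomputable def NumSgp.type (S : NumSgp) : ℕ := S.PF.ncard

/-- `S` is a MED semigroup: its multiplicity is an Arf element, i.e. for all
`x, y ∈ S` with `x, y ≥ m(S)`, `x + y - m(S) ∈ S`. -/
def NumSgp.IsMED (S : NumSgp) : Prop := S.ArfElem S.mult

/-- The MED closure of `S`: the intersection of all MED numerical semigroups
containing `S` with the same multiplicity. -/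
def NumSgp.MEDclosure (S : NumSgp) : Set ℕ :=
  ⋂ T ∈ {T : NumSgp | S.carrier ⊆ T.carrier ∧ T.mult = S.mult ∧ T.IsMED}, T.carrier

namespace NumSgp

variable {S S' T : NumSgp}

lemma exists_mem_ne_zero (S : NumSgp) : ∃ n ∈ S.carrier, n ≠ 0 := by
  have hinf : S.carrier.Infinite := by simpa using S.cofinite.infinite_compl
  obtain ⟨n, hn, hn0⟩ := (hinf.sdiff (Set.finite_singleton 0)).nonempty
  exact ⟨n, hn, hn0⟩

lemma mult_mem_and_ne_zero (S : NumSgp) : S.mult ∈ S.carrier ∧ S.mult ≠ 0 :=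
  Nat.sInf_mem S.exists_mem_ne_zero

lemma mult_mem (S : NumSgp) : S.mult ∈ S.carrier := S.mult_mem_and_ne_zero.1

lemma mult_ne_zero (S : NumSgp) : S.mult ≠ 0 := S.mult_mem_and_ne_zero.2

lemma mult_le {n : ℕ} (hn : n ∈ S.carrier) (hn0 : n ≠ 0) : S.mult ≤ n :=
  Nat.sInf_le ⟨hn, hn0⟩

lemma closure_subset {A : Set ℕ} (h : A ⊆ T.carrier) :
    (AddSubmonoid.closure A : Set ℕ) ⊆ T.carrier :=
  (AddSubmonoid.closure_le (S := ⟨⟨T.carrier, fun ha hb => T.add_mem ha hb⟩, T.zero_mem⟩)).2 h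

def ordinary (m : ℕ) : NumSgp where
  carrier := {n | n = 0 ∨ m ≤ n}
  zero_mem := Or.inl rfl
  add_mem := by
    rintro a b (rfl | ha) (rfl | hb) <;> show _ ∨ _ <;> omega
  cofinite := (Set.finite_Iio m).subset fun n hn => by
    simp only [Set.mem_compl_iff, Set.mem_ofPred_eq, not_or] at hn
    exact Set.mem_Iio.2 (Nat.lt_of_not_le hn.2)

lemma mult_ordinary {m : ℕ} (hm : m ≠ 0) : (ordinary m).mult = m :=
  le_antisymm (mult_le (Or.inr le_rfl) hm)
    ((ordinary m).mult_mem.resolve_left (ordinary m).mult_ne_zero)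

lemma isMED_ordinary (m : ℕ) : (ordinary m).IsMED := by
  intro x hx y _ hxm hym
  -- `x ≠ 0` forces `m ≤ x`, and `x ≤ x + y - mult`.
  have hx0 : x ≠ 0 := by have := (ordinary m).mult_ne_zero; omega
  right
  have := hx.resolve_left hx0
  omega

lemma subset_ordinary_mult (S : NumSgp) : S.carrier ⊆ (ordinary S.mult).carrier := by
  intro n hn
  rcases eq_or_ne n 0 with rfl | hn0
  · exact Or.inl rfl
  · exact Or.inr (mult_le hn hn0)

lemma MEDclosure_subset (hST : S.carrier ⊆ T.carrier) (hmT : T.mult = S.mult)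
    (hT : T.IsMED) : S.MEDclosure ⊆ T.carrier :=
  Set.biInter_subset_of_mem (t := fun T : NumSgp => T.carrier) ⟨hST, hmT, hT⟩

lemma MEDclosure_subset_ordinary (S : NumSgp) : S.MEDclosure ⊆ (ordinary S.mult).carrier :=
  MEDclosure_subset S.subset_ordinary_mult (mult_ordinary S.mult_ne_zero) (isMED_ordinary _)

lemma mult_eq_of_subset (h₁ : S.carrier ⊆ S'.carrier)
    (h₂ : S'.carrier ⊆ (ordinary S.mult).carrier) : S'.mult = S.mult :=
  le_antisymm (mult_le (h₁ S.mult_mem) S.mult_ne_zero)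
    ((h₂ S'.mult_mem).resolve_left S'.mult_ne_zero)

lemma MEDclosure_eq_of_subset (h₁ : S.carrier ⊆ S'.carrier) (h₂ : S'.carrier ⊆ S.MEDclosure) :
    S'.MEDclosure = S.MEDclosure := by
  have hm : S'.mult = S.mult := mult_eq_of_subset h₁ (h₂.trans S.MEDclosure_subset_ordinary)
  have hadm : {T : NumSgp | S'.carrier ⊆ T.carrier ∧ T.mult = S'.mult ∧ T.IsMED} =
      {T | S.carrier ⊆ T.carrier ∧ T.mult = S.mult ∧ T.IsMED} := by
    ext T
    simp only [Set.mem_ofPred_eq, hm]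
    exact ⟨fun ⟨hT, hmT, hMED⟩ => ⟨h₁.trans hT, hmT, hMED⟩,
      fun ⟨hT, hmT, hMED⟩ => ⟨h₂.trans (MEDclosure_subset hT hmT hMED), hmT, hMED⟩⟩
  unfold MEDclosure
  rw [hadm]

end NumSgp

theorem med_closure_adjoin (S : NumSgp) (u : ℕ) (hu : u ∈ S.MEDclosure)
    (Su : NumSgp) (hSu : Su.carrier = ↑(AddSubmonoid.closure (S.carrier ∪ {u}))) :
    Su.MEDclosure = S.MEDclosure := by
  have hS_sub : S.carrier ⊆ Su.carrier :=
    hSu ▸ Set.subset_union_left.trans AddSubmonoid.subset_closure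
  have hSu_sub : Su.carrier ⊆ S.MEDclosure :=
    Set.subset_iInter₂ fun T hT => hSu ▸ NumSgp.closure_subset
      (Set.union_subset hT.1 (Set.singleton_subset_iff.2 (Set.mem_iInter₂.1 hu T hT)))
  exact NumSgp.MEDclosure_eq_of_subset hS_sub hSu_sub
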